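/- There exists β > 0 such that for every x ∈ ℝ^d with all coordinates nonnegative, ⟨B(x) − D(x), x − x*⟩ ≤ −β·‖x‖·‖x − x*‖². -/

import Mathlib

open scoped BigOperators RealInnerProductSpace

noncomputable section

namespace LVExample

variable {d : ℕ}

/-- `S(x) = Σ_j x_j`. -/
def Svec (x : EuclideanSpace ℝ (Fin d)) : ℝ := ∑ j, x j

/-- The birth vector field `B_j(x) = λ·S(x)`. -/
def Bvec (lam : ℝ) (x : EuclideanSpace ℝ (Fin d)) : EuclideanSpace ℝ (Fin d) :=
  WithLp.toLp 2 fun _ => lam * Svec x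

/-- The death vector field `D_j(x) = x_j·(μ + κ·S(x))`. -/
def Dvec (mu kappa : ℝ) (x : EuclideanSpace ℝ (Fin d)) : EuclideanSpace ℝ (Fin d) :=
  WithLp.toLp 2 fun j => x j * (mu + kappa * Svec x)

/-- The fixed point `x*` with `x*_j = S*/d` where `S* = (λ·d − μ)/κ`. -/
def xstar (d : ℕ) (lam mu kappa : ℝ) : EuclideanSpace ℝ (Fin d) :=
  WithLp.toLp 2 fun _ => ((lam * d - mu) / kappa) / d

end LVExample

open LVExample

/-!
With `y = x - x*` and `S = S(x)`, the identity `κ S* = λ d - μ` rewrites `B(x) - D(x)` as the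
constant vector `(μ/d) Σⱼ yⱼ` minus `(μ + κ S) y`, so `⟨B(x) - D(x), y⟩ = (μ/d) (Σⱼ yⱼ)² - (μ + κ S) ‖y‖²`.
Cauchy–Schwarz bounds `(Σⱼ yⱼ)²` by `d ‖y‖²`, which leaves `-κ S ‖y‖²`, and on the nonnegative
orthant `‖x‖ ≤ S`; hence `β = κ` works.
-/

namespace EuclideanSpace

variable {ι : Type*} [Fintype ι]

theorem norm_le_sum_of_nonneg {x : EuclideanSpace ℝ ι} (hx : ∀ i, 0 ≤ x i) :
    ‖x‖ ≤ ∑ i, x i := by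
  refine le_of_sq_le_sq ?_ (Finset.sum_nonneg fun i _ => hx i)
  rw [real_norm_sq_eq]
  exact Finset.sum_sq_le_sq_sum_of_nonneg fun i _ => hx i

theorem sq_sum_le_card_mul_norm_sq (y : EuclideanSpace ℝ ι) :
    (∑ i, y i) ^ 2 ≤ Fintype.card ι * ‖y‖ ^ 2 := by
  rw [real_norm_sq_eq]
  exact sq_sum_le_card_mul_sum_sq

theorem inner_toLp_const_sub_smul_self (a b : ℝ) (y : EuclideanSpace ℝ ι) :
    ⟪WithLp.toLp 2 (fun _ => a) - b • y, y⟫ = a * ∑ i, y i - b * ‖y‖ ^ 2 := by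
  rw [inner_sub_left, real_inner_smul_left, real_inner_self_eq_norm_sq, inner_toLp_toLp]
  simp [dotProduct, Finset.mul_sum, mul_comm]

end EuclideanSpace

namespace LVExample

variable {d : ℕ} {lam mu kappa : ℝ}

theorem birth_sub_death_eq (hd : (d : ℝ) ≠ 0) (hkappa : kappa ≠ 0)
    (x : EuclideanSpace ℝ (Fin d)) :
    Bvec lam x - Dvec mu kappa x =
      WithLp.toLp 2 (fun _ => mu / d * Svec (x - xstar d lam mu kappa))
        - (mu + kappa * Svec x) • (x - xstar d lam mu kappa) := by
  ext j
  simp only [Bvec, Svec, Dvec, PiLp.sub_apply, xstar, Finset.sum_sub_distrib, Finset.sum_const,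
    Finset.card_univ, Fintype.card_fin, nsmul_eq_mul, PiLp.smul_apply, smul_eq_mul]
  field_simp
  ring

theorem inner_birth_sub_death_eq (hd : (d : ℝ) ≠ 0) (hkappa : kappa ≠ 0)
    (x : EuclideanSpace ℝ (Fin d)) :
    ⟪Bvec lam x - Dvec mu kappa x, x - xstar d lam mu kappa⟫ =
      mu / d * Svec (x - xstar d lam mu kappa) ^ 2
        - (mu + kappa * Svec x) * ‖x - xstar d lam mu kappa‖ ^ 2 := by
  rw [birth_sub_death_eq hd hkappa, EuclideanSpace.inner_toLp_const_sub_smul_self, Svec]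
  ring

theorem inner_birth_sub_death_le (hmu : 0 < mu / d) (hkappa : kappa ≠ 0)
    (x : EuclideanSpace ℝ (Fin d)) :
    ⟪Bvec lam x - Dvec mu kappa x, x - xstar d lam mu kappa⟫ ≤
      -kappa * Svec x * ‖x - xstar d lam mu kappa‖ ^ 2 := by
  have hd : (d : ℝ) ≠ 0 := by rintro h; simp [h] at hmu
  set y := x - xstar d lam mu kappa
  have hCS : mu / d * Svec y ^ 2 ≤ mu * ‖y‖ ^ 2 := calc
    mu / d * Svec y ^ 2 ≤ mu / d * (d * ‖y‖ ^ 2) := by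
      gcongr
      simpa [Svec] using EuclideanSpace.sq_sum_le_card_mul_norm_sq y
    _ = mu * ‖y‖ ^ 2 := by field_simp
  rw [inner_birth_sub_death_eq hd hkappa]
  linarith

end LVExample

theorem lv_example_hypothesis_H3_general (d : ℕ) (lam mu kappa : ℝ)
    (hkappa : 0 < kappa) (hmu : 0 < mu / d) :
    ∃ β : ℝ, 0 < β ∧ ∀ x : EuclideanSpace ℝ (Fin d), (∀ i, 0 ≤ x i) →
      ⟪Bvec lam x - Dvec mu kappa x, x - xstar d lam mu kappa⟫
        ≤ -β * ‖x‖ * ‖x - xstar d lam mu kappa‖ ^ 2 := by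
  refine ⟨kappa, hkappa, fun x hx => ?_⟩
  calc ⟪Bvec lam x - Dvec mu kappa x, x - xstar d lam mu kappa⟫
      ≤ -kappa * Svec x * ‖x - xstar d lam mu kappa‖ ^ 2 :=
        inner_birth_sub_death_le hmu hkappa.ne' x
    _ ≤ -kappa * ‖x‖ * ‖x - xstar d lam mu kappa‖ ^ 2 := by
        simp only [neg_mul, neg_le_neg_iff]
        gcongr
        exact EuclideanSpace.norm_le_sum_of_nonneg hx

/-- for the example, there exists `β > 0` such that for every `x` in the
nonnegative orthant, `⟨B(x) − D(x), x − x*⟩ ≤ −β·‖x‖·‖x − x*‖²`. -/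
theorem lv_example_hypothesis_H3 (d : ℕ) (hd : 1 ≤ d) (lam mu kappa : ℝ)
    (hkappa : 0 < kappa) (hmu : 0 < mu / d) (hlam : mu / d < lam) :
    ∃ β : ℝ, 0 < β ∧ ∀ x : EuclideanSpace ℝ (Fin d), (∀ i, 0 ≤ x i) →
      ⟪Bvec lam x - Dvec mu kappa x, x - xstar d lam mu kappa⟫
        ≤ -β * ‖x‖ * ‖x - xstar d lam mu kappa‖ ^ 2 :=
  lv_example_hypothesis_H3_general d lam mu kappa hkappa hmu
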